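/- Four positive real numbers u₁, u₂, u₃, u₄ are, respectively, the two side lengths and the two diagonal lengths of some nondegenerate parallelogram in the Euclidean plane if and only if they satisfy the equation u₃² + u₄² = 2u₁² + 2u₂² and the two inequalities u₃ < u₁ + u₂ and u₄ < u₁ + u₂. -/

import Mathlib

/-!
With `x = A - E` and `y = F - E` the sides are `‖x‖, ‖y‖` and the diagonals `‖x - y‖, ‖x + y‖`,
so for `t = ⟪x, y⟫` the squared diagonals are `u₁² + u₂² ∓ 2t`; their sum gives the equation.
The parallelogram is nondegenerate exactly when Cauchy–Schwarz is strict, `|t| < u₁ u₂`, and the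
two halves `-u₁ u₂ < t` and `t < u₁ u₂` of this are the two strict inequalities. Conversely every
such `t` is the inner product of two plane vectors of lengths `u₁` and `u₂`.
-/

open EuclideanGeometry InnerProductGeometry RealInnerProductSpace

theorem collinear_iff_abs_inner_eq_norm_mul_norm {V P : Type*} [NormedAddCommGroup V]
    [InnerProductSpace ℝ V] [MetricSpace P] [NormedAddTorsor V P] (p₁ p₂ p₃ : P) :
    Collinear ℝ ({p₁, p₂, p₃} : Set P) ↔
      |⟪p₁ -ᵥ p₂, p₃ -ᵥ p₂⟫| = ‖p₁ -ᵥ p₂‖ * ‖p₃ -ᵥ p₂‖ := by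
  rw [collinear_iff_eq_or_eq_or_angle_eq_zero_or_angle_eq_pi]
  by_cases h₁ : p₁ = p₂
  · simp [h₁]
  by_cases h₃ : p₃ = p₂
  · simp [h₃]
  have hv₁ : p₁ -ᵥ p₂ ≠ 0 := vsub_ne_zero.2 h₁
  have hv₃ : p₃ -ᵥ p₂ ≠ 0 := vsub_ne_zero.2 h₃
  rw [abs_eq (by positivity), inner_eq_mul_norm_iff_angle_eq_zero hv₁ hv₃,
    inner_eq_neg_mul_norm_iff_angle_eq_pi hv₁ hv₃]
  simp [h₁, h₃, EuclideanGeometry.angle]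

theorem lt_add_iff_neg_mul_lt_of_sq_eq {a b c t : ℝ} (ha : 0 ≤ a) (hb : 0 ≤ b) (hc : 0 ≤ c)
    (h : c ^ 2 = a ^ 2 + b ^ 2 - 2 * t) : c < a + b ↔ -(a * b) < t := by
  rw [← pow_lt_pow_iff_left₀ hc (add_nonneg ha hb) two_ne_zero, h]
  constructor <;> intro <;> linarith

theorem exists_norm_eq_norm_eq_inner_eq {a b t : ℝ} (ha : 0 < a) (ht : |t| ≤ a * b) :
    ∃ x y : EuclideanSpace ℝ (Fin 2), ‖x‖ = a ∧ ‖y‖ = b ∧ ⟪x, y⟫ = t := by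
  have hb : 0 ≤ b := nonneg_of_mul_nonneg_right ((abs_nonneg t).trans ht) ha
  have hta : (t / a) ^ 2 ≤ b ^ 2 := by
    rw [div_pow, div_le_iff₀ (by positivity), ← mul_pow, ← sq_abs]
    exact pow_le_pow_left₀ (abs_nonneg t) (by linarith) 2
  refine ⟨!₂[a, 0], !₂[t / a, √(b ^ 2 - (t / a) ^ 2)], ?_, ?_, ?_⟩
  · simp [EuclideanSpace.norm_eq, ha.le]
  · rw [EuclideanSpace.norm_eq, Real.sqrt_eq_iff_eq_sq (by positivity) hb]
    simp [Real.sq_sqrt (sub_nonneg.2 hta)]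
  · simp [EuclideanSpace.inner_eq_star_dotProduct, ha.ne']

theorem sq_add_sq_eq_and_lt_add_iff_exists_abs_lt {u₁ u₂ u₃ u₄ : ℝ} (h₁ : 0 ≤ u₁) (h₂ : 0 ≤ u₂)
    (h₃ : 0 ≤ u₃) (h₄ : 0 ≤ u₄) :
    (u₃ ^ 2 + u₄ ^ 2 = 2 * u₁ ^ 2 + 2 * u₂ ^ 2 ∧ u₃ < u₁ + u₂ ∧ u₄ < u₁ + u₂) ↔
      ∃ t, |t| < u₁ * u₂ ∧ u₃ ^ 2 = u₁ ^ 2 + u₂ ^ 2 - 2 * t ∧ u₄ ^ 2 = u₁ ^ 2 + u₂ ^ 2 + 2 * t := by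
  constructor
  · rintro ⟨h_eq, h₃_lt, h₄_lt⟩
    have h_sub : u₃ ^ 2 = u₁ ^ 2 + u₂ ^ 2 - 2 * ((u₄ ^ 2 - u₃ ^ 2) / 4) := by linarith
    have h_add : u₄ ^ 2 = u₁ ^ 2 + u₂ ^ 2 - 2 * -((u₄ ^ 2 - u₃ ^ 2) / 4) := by linarith
    refine ⟨(u₄ ^ 2 - u₃ ^ 2) / 4, abs_lt.2 ⟨?_, ?_⟩, h_sub, by linarith⟩
    · exact (lt_add_iff_neg_mul_lt_of_sq_eq h₁ h₂ h₃ h_sub).1 h₃_lt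
    · exact neg_lt_neg_iff.1 ((lt_add_iff_neg_mul_lt_of_sq_eq h₁ h₂ h₄ h_add).1 h₄_lt)
  · rintro ⟨t, ht, h_sub, h_add⟩
    replace h_add : u₄ ^ 2 = u₁ ^ 2 + u₂ ^ 2 - 2 * -t := by linarith
    refine ⟨by linarith, (lt_add_iff_neg_mul_lt_of_sq_eq h₁ h₂ h₃ h_sub).2 (abs_lt.1 ht).1,
      (lt_add_iff_neg_mul_lt_of_sq_eq h₁ h₂ h₄ h_add).2 (neg_lt_neg (abs_lt.1 ht).2)⟩

/-- Characterization of side and diagonal lengths of a nondegenerate parallelogram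
via the parallelogram equation and the two upper bounds `u₃ < u₁ + u₂`, `u₄ < u₁ + u₂`. -/
theorem parallelogram_characterization_upper
    (u₁ u₂ u₃ u₄ : ℝ) (h₁ : 0 < u₁) (h₂ : 0 < u₂) (h₃ : 0 < u₃) (h₄ : 0 < u₄) :
    (∃ A B F E : EuclideanSpace ℝ (Fin 2),
        B - A = F - E ∧
        ¬ Collinear ℝ ({A, E, F} : Set (EuclideanSpace ℝ (Fin 2))) ∧
        dist A E = u₁ ∧ dist E F = u₂ ∧ dist A F = u₃ ∧ dist E B = u₄) ↔
      (u₃ ^ 2 + u₄ ^ 2 = 2 * u₁ ^ 2 + 2 * u₂ ^ 2 ∧ u₃ < u₁ + u₂ ∧ u₄ < u₁ + u₂) := by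
  rw [sq_add_sq_eq_and_lt_add_iff_exists_abs_lt h₁.le h₂.le h₃.le h₄.le]
  constructor
  · rintro ⟨A, B, F, E, hBA, hncol, rfl, rfl, rfl, rfl⟩
    have hB : B - E = (A - E) + (F - E) := by rw [← sub_add_sub_cancel B A E, hBA, add_comm]
    have hAF : A - F = (A - E) - (F - E) := (sub_sub_sub_cancel_right A F E).symm
    have hlt : |⟪A - E, F - E⟫| < ‖A - E‖ * ‖F - E‖ :=
      (abs_real_inner_le_norm _ _).lt_of_ne
        (mt (collinear_iff_abs_inner_eq_norm_mul_norm A E F).2 hncol)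
    simp only [dist_eq_norm, norm_sub_rev E]
    refine ⟨⟪A - E, F - E⟫, hlt, ?_, ?_⟩
    · rw [hAF, norm_sub_sq_real]; ring
    · rw [hB, norm_add_sq_real]; ring
  · rintro ⟨t, ht, h_sub, h_add⟩
    obtain ⟨x, y, rfl, rfl, rfl⟩ := exists_norm_eq_norm_eq_inner_eq h₁ ht.le
    refine ⟨x, x + y, y, 0, by simp, ?_, by simp, by simp, ?_, ?_⟩
    · simpa [collinear_iff_abs_inner_eq_norm_mul_norm] using ht.ne
    · rw [dist_eq_norm, ← sq_eq_sq₀ (norm_nonneg _) h₃.le, norm_sub_sq_real, h_sub]; ring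
    · rw [dist_eq_norm, zero_sub, norm_neg, ← sq_eq_sq₀ (norm_nonneg _) h₄.le, norm_add_sq_real,
        h_add]
      ring
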